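/- arXiv:1109.0479 — 6 statements merged into one kernel-verified Lean document; each statement's English description precedes it below -/
import Mathlib

section
/- Let 0 < ρ < 1, g_n = n ρ^{n/2} if n = 2^j for some j ≥ 1 and g_n = 0 otherwise, and for each k ≥ 1 set δ_k = ρ^{n_k} with n_k = 2^k + 2^{k-1}. Then there exists a constant C such that for all k, Σ_{n≥1} δ_k |g_n|² / (n (δ_k² + ρ^{2n})) ≤ C. -/
/-!
Only the terms with n = 2^j survive, and there the summand equals n ρ^(N+n) / (ρ^(2N) + ρ^(2n))
with N = 3·2^(k-1). Since ρ^(N+n) = ρ^|N-n| ρ^(2 min(N,n)), the summand is at most n ρ^|N-n|, and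
a power of two is never closer to 3·2^(k-1) than a quarter of itself, so n ρ^|N-n| ≤ n r^n with
r = ρ^(1/4). The bound ∑ n r^n is independent of k.
-/

theorem Nat.pow_two_le_four_mul_dist_three_mul_pow_two (j k : ℕ) :
    2 ^ j ≤ 4 * Nat.dist (3 * 2 ^ k) (2 ^ j) := by
  unfold Nat.dist
  rcases le_or_gt j k with hjk | hkj
  · have : 2 ^ j ≤ 2 ^ k := Nat.pow_le_pow_right two_pos hjk
    omega
  · obtain rfl | hkj := eq_or_lt_of_le (Nat.succ_le_of_lt hkj)
    · rw [pow_succ]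
      omega
    · have h4 : 2 ^ j = 4 * 2 ^ (j - 2) := by
        rw [show (4 : ℕ) = 2 ^ 2 from rfl, ← pow_add]
        congr 1
        omega
      have : 2 ^ k ≤ 2 ^ (j - 2) := Nat.pow_le_pow_right two_pos (by omega)
      omega

theorem pow_add_le_pow_dist_mul {ρ : ℝ} (hρ : 0 ≤ ρ) (a b : ℕ) :
    ρ ^ (a + b) ≤ ρ ^ Nat.dist a b * (ρ ^ (2 * a) + ρ ^ (2 * b)) := by
  wlog hab : a ≤ b generalizing a b
  · simpa only [add_comm, Nat.dist_comm] using this b a (by omega)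
  have hsplit : ρ ^ (a + b) = ρ ^ Nat.dist a b * ρ ^ (2 * a) := by
    rw [Nat.dist_eq_sub_of_le hab, ← pow_add]
    congr 1
    omega
  rw [hsplit]
  gcongr
  exact le_add_of_nonneg_right (by positivity)

theorem mul_sq_mul_pow_div_le {ρ x : ℝ} (hρ : 0 < ρ) (hx : 0 ≤ x) (a b : ℕ) :
    ρ ^ a * (x ^ 2 * ρ ^ b) / (x * ((ρ ^ a) ^ 2 + ρ ^ (2 * b))) ≤ x * ρ ^ Nat.dist a b := by
  rcases hx.eq_or_lt with rfl | hx
  · simp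
  rw [← pow_mul, mul_comm a 2, div_le_iff₀ (by positivity)]
  calc ρ ^ a * (x ^ 2 * ρ ^ b) = x ^ 2 * ρ ^ (a + b) := by ring
    _ ≤ x ^ 2 * (ρ ^ Nat.dist a b * (ρ ^ (2 * a) + ρ ^ (2 * b))) := by
      gcongr
      exact pow_add_le_pow_dist_mul hρ.le a b
    _ = x * ρ ^ Nat.dist a b * (x * (ρ ^ (2 * a) + ρ ^ (2 * b))) := by ring

theorem ENNReal.tsum_ofReal_le_ofReal_tsum {ι : Type*} {f u : ι → ℝ} (hu : Summable u)
    (hu0 : ∀ i, 0 ≤ u i) (hfu : ∀ i, f i ≤ u i) :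
    ∑' i, ENNReal.ofReal (f i) ≤ ENNReal.ofReal (∑' i, u i) := by
  rw [ENNReal.ofReal_tsum_of_nonneg hu0 hu]
  exact ENNReal.tsum_le_tsum fun i => ENNReal.ofReal_le_ofReal (hfu i)

theorem summable_succ_mul_pow_succ {r : ℝ} (hr0 : 0 ≤ r) (hr1 : r < 1) :
    Summable fun n : ℕ => ((n : ℝ) + 1) * r ^ (n + 1) := by
  have h := summable_pow_mul_geometric_of_norm_lt_one 1
    (by rwa [Real.norm_eq_abs, abs_of_nonneg hr0] : ‖r‖ < 1)
  refine ((summable_nat_add_iff 1).2 h).congr fun n => ?_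
  push_cast
  ring

theorem sq_mul_rpow_half {ρ : ℝ} (hρ : 0 ≤ ρ) (m : ℕ) :
    ((m : ℝ) * ρ ^ ((m : ℝ) / 2)) ^ 2 = (m : ℝ) ^ 2 * ρ ^ m := by
  rw [mul_pow, ← Real.rpow_mul_natCast hρ, Nat.cast_ofNat, div_mul_cancel₀ _ two_ne_zero,
    Real.rpow_natCast]

/-- With g_n as in stmt0 and δ_k = ρ^{2^k + 2^{k-1}}, the dissipation sums
Σ_{n≥1} δ_k |g_n|²/(n(δ_k² + ρ^{2n})) are bounded uniformly in k. -/
theorem stmt1 (ρ : ℝ) (hρ : 0 < ρ) (hρ1 : ρ < 1) (g : ℕ → ℝ)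
    (hg_pow : ∀ n : ℕ, (∃ j : ℕ, 1 ≤ j ∧ n = 2 ^ j) → g n = n * ρ ^ ((n : ℝ) / 2))
    (hg_zero : ∀ n : ℕ, 1 ≤ n → (¬ ∃ j : ℕ, 1 ≤ j ∧ n = 2 ^ j) → g n = 0) :
    ∃ C : ℝ, ∀ k : ℕ, 1 ≤ k →
      ∑' n : ℕ, ENNReal.ofReal
        (ρ ^ (2 ^ k + 2 ^ (k - 1)) * |g (n + 1)| ^ 2 /
          ((n + 1) * ((ρ ^ (2 ^ k + 2 ^ (k - 1))) ^ 2 + ρ ^ (2 * (n + 1)))))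
        ≤ ENNReal.ofReal C := by
  set r := ρ ^ (4⁻¹ : ℝ)
  have hr0 : 0 < r := by positivity
  have hr1 : r < 1 := Real.rpow_lt_one hρ.le hρ1 (by norm_num)
  have hρr : r ^ 4 = ρ := by
    rw [← Real.rpow_mul_natCast hρ.le]
    norm_num
  refine ⟨∑' n : ℕ, ((n : ℝ) + 1) * r ^ (n + 1), fun k hk => ?_⟩
  refine ENNReal.tsum_ofReal_le_ofReal_tsum (summable_succ_mul_pow_succ hr0.le hr1)
    (fun n => by positivity) fun n => ?_
  have hN : 2 ^ k + 2 ^ (k - 1) = 3 * 2 ^ (k - 1) := by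
    rw [← Nat.two_pow_pred_add_two_pow_pred hk]
    ring
  by_cases hpow : ∃ j, 1 ≤ j ∧ n + 1 = 2 ^ j
  · rw [sq_abs, hg_pow _ hpow, sq_mul_rpow_half hρ.le, ← Nat.cast_succ]
    obtain ⟨j, -, hj⟩ := hpow
    have hgap := Nat.pow_two_le_four_mul_dist_three_mul_pow_two j (k - 1)
    rw [← hj, ← hN] at hgap
    calc _ ≤ ((n + 1 : ℕ) : ℝ) * ρ ^ Nat.dist (2 ^ k + 2 ^ (k - 1)) (n + 1) :=
          mul_sq_mul_pow_div_le hρ (Nat.cast_nonneg _) _ _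
      _ ≤ ((n + 1 : ℕ) : ℝ) * r ^ (n + 1) := by
          rw [← hρr, ← pow_mul]
          exact mul_le_mul_of_nonneg_left (pow_le_pow_of_le_one hr0.le hr1.le hgap)
            (Nat.cast_nonneg _)
  · rw [hg_zero _ (Nat.le_add_left 1 n) hpow, abs_zero, zero_pow two_ne_zero, mul_zero, zero_div]
    positivity
end

section
/- Let 0 < ρ < 1 and let (g_n)_{n≥1} be a sequence of complex numbers. Suppose there exists a strictly increasing sequence of positive integers (n_k) such that ρ^{n_{k+1} − n_k} · |g_{n_k}|² / (n_k ρ^{n_k}) → ∞ as k → ∞ (the gap property GP). Then ρ^α · Σ_{1 ≤ n ≤ α} |g_n|²/(n ρ^{2n}) → ∞ as α → ∞ (α ranging over positive reals). -/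
/-!
For `α ≥ n_K` let `k = k(α) ≥ K`. Keeping only the term `n = n_k` of the sum and using
`ρ ^ α ≥ ρ ^ (⌊α⌋ + 1) ≥ ρ ^ n_{k+1}` bounds `ρ ^ α · Σ_{n ≤ α}` from below by exactly the
`k`-th term of the gap-property sequence, which tends to infinity.
-/

open Filter Finset

theorem Monotone.exists_le_lt_apply_succ {α : Type*} [LinearOrder α] {f : ℕ → α}
    (hf : Monotone f) {K : ℕ} {a : α} (hK : f K ≤ a) (ha : ∃ m, a < f m) :
    ∃ k, K ≤ k ∧ f k ≤ a ∧ a < f (k + 1) := by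
  classical
  have hK_lt : K < Nat.find ha := by
    by_contra! h
    exact (Nat.find_spec ha).not_ge ((hf h).trans hK)
  obtain ⟨k, hk⟩ := Nat.exists_eq_add_of_lt hK_lt
  refine ⟨K + k, Nat.le_add_right K k, ?_, ?_⟩
  · exact not_lt.1 (Nat.find_min ha (by omega))
  · have := Nat.find_spec ha
    rwa [hk] at this

theorem pow_sub_mul_div_eq {K : Type*} [Field K] {ρ : K} (hρ : ρ ≠ 0) {m m' : ℕ} (h : m ≤ m')
    (x c : K) : ρ ^ (m' - m) * x / (c * ρ ^ m) = ρ ^ m' * (x / (c * ρ ^ (2 * m))) := by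
  obtain ⟨d, rfl⟩ := Nat.exists_eq_add_of_le h
  rw [Nat.add_sub_cancel_left]
  field_simp
  ring

theorem rpow_natFloor_add_one_le {ρ : ℝ} (hρ : 0 < ρ) (hρ1 : ρ ≤ 1) (α : ℝ) :
    ρ ^ (⌊α⌋₊ + 1) ≤ ρ ^ α := by
  rw [← Real.rpow_natCast]
  exact Real.rpow_le_rpow_of_exponent_ge hρ hρ1 (by exact_mod_cast (Nat.lt_floor_add_one α).le)

theorem gap_term_le_pow_mul_sum {ρ : ℝ} (hρ : 0 < ρ) (hρ1 : ρ ≤ 1) {a : ℕ → ℝ}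
    (ha : ∀ n, 0 ≤ a n) {m m' N : ℕ} (hm : 1 ≤ m) (hmN : m ≤ N) (hNm' : N < m') :
    ρ ^ (m' - m) * a m / (m * ρ ^ m) ≤
      ρ ^ (N + 1) * ∑ n ∈ Icc 1 N, a n / (n * ρ ^ (2 * n)) := by
  rw [pow_sub_mul_div_eq hρ.ne' (hmN.trans hNm'.le)]
  have h_nonneg (n : ℕ) : 0 ≤ a n / (n * ρ ^ (2 * n)) := div_nonneg (ha n) (by positivity)
  exact mul_le_mul (pow_le_pow_of_le_one hρ.le hρ1 hNm')
    (single_le_sum (fun n _ => h_nonneg n) (mem_Icc.2 ⟨hm, hmN⟩)) (h_nonneg m) (by positivity)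

theorem stmt4_general (ρ : ℝ) (hρ : 0 < ρ) (hρ1 : ρ < 1) (g : ℕ → ℂ)
    (nk : ℕ → ℕ) (hmono : StrictMono nk)
    (hGP : Tendsto (fun k : ℕ =>
        ρ ^ (nk (k + 1) - nk k) * ‖g (nk k)‖ ^ 2 /
          (nk k * ρ ^ nk k)) atTop atTop) :
    Tendsto (fun α : ℝ => ρ ^ α * ∑ n ∈ Finset.Icc 1 ⌊α⌋₊,
      ‖g n‖ ^ 2 / (n * ρ ^ (2 * n))) atTop atTop := by
  rw [tendsto_atTop]
  intro b
  obtain ⟨K, hK⟩ := eventually_atTop.1 (hGP.eventually_ge_atTop b)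
  -- starting at `nk (K + 1)` forces `k ≥ 1`, so `1 ≤ k ≤ nk k` and `nk k` is a summation index
  filter_upwards [eventually_ge_atTop (nk (K + 1) : ℝ)] with α hα
  obtain ⟨k, hKk, hk, hk_succ⟩ := hmono.monotone.exists_le_lt_apply_succ (Nat.le_floor hα)
    ⟨⌊α⌋₊ + 1, (Nat.lt_succ_self _).trans_le hmono.le_apply⟩
  calc b ≤ ρ ^ (nk (k + 1) - nk k) * ‖g (nk k)‖ ^ 2 / (nk k * ρ ^ nk k) := hK k (by omega)
    _ ≤ ρ ^ (⌊α⌋₊ + 1) * ∑ n ∈ Icc 1 ⌊α⌋₊, ‖g n‖ ^ 2 / (n * ρ ^ (2 * n)) :=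
        gap_term_le_pow_mul_sum hρ hρ1.le (a := fun n => ‖g n‖ ^ 2) (fun n => by positivity)
          ((by omega : 1 ≤ k).trans hmono.le_apply) hk hk_succ
    _ ≤ ρ ^ α * ∑ n ∈ Icc 1 ⌊α⌋₊, ‖g n‖ ^ 2 / (n * ρ ^ (2 * n)) := by
        gcongr
        exact rpow_natFloor_add_one_le hρ hρ1.le α

/-- The gap property GP implies ρ^α Σ_{1≤n≤α} |g_n|²/(n ρ^{2n}) → ∞ as α → ∞. -/
theorem stmt4 (ρ : ℝ) (hρ : 0 < ρ) (hρ1 : ρ < 1) (g : ℕ → ℂ)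
    (nk : ℕ → ℕ) (hmono : StrictMono nk) (hpos : 1 ≤ nk 0)
    (hGP : Tendsto (fun k : ℕ =>
        ρ ^ (nk (k + 1) - nk k) * ‖g (nk k)‖ ^ 2 /
          (nk k * ρ ^ nk k)) atTop atTop) :
    Tendsto (fun α : ℝ => ρ ^ α * ∑ n ∈ Finset.Icc 1 ⌊α⌋₊,
      ‖g n‖ ^ 2 / (n * ρ ^ (2 * n))) atTop atTop :=
  stmt4_general ρ hρ hρ1 g nk hmono hGP
end

section
/- Let 0 < ρ < 1 and (g_n)_{n≥1} a complex sequence with limsup_{n→∞} |g_n|²/(n ρ^n) = ∞. Then limsup_{δ→0⁺} Σ_{n≥1} δ|g_n|²/(n(δ² + ρ^{2n})) = ∞. -/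
open Filter Topology

/-!
At `δ = ρ ^ m` the `m`-th term of the series alone equals half of `|g_m|² / (m ρ^m)`, since its
denominator is `m (ρ^{2m} + ρ^{2m})`. As `ρ ^ m → 0⁺`, the limsup of the series at `0⁺` dominates
half the limsup of `|g_m|² / (m ρ^m)`, which is infinite.
-/

lemma half_le_tsum_at_pow {ρ : ℝ} (hρ : 0 < ρ) (a : ℕ → ℝ) (m : ℕ) :
    ENNReal.ofReal (a (m + 1) / ((m + 1 : ℕ) * ρ ^ (m + 1))) / 2 ≤
      ∑' n : ℕ, ENNReal.ofReal (ρ ^ (m + 1) * a (n + 1) /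
        ((n + 1) * ((ρ ^ (m + 1)) ^ 2 + ρ ^ (2 * (n + 1))))) := by
  have hterm : ρ ^ (m + 1) * a (m + 1) /
      ((m + 1) * ((ρ ^ (m + 1)) ^ 2 + ρ ^ (2 * (m + 1)))) =
        a (m + 1) / ((m + 1 : ℕ) * ρ ^ (m + 1)) / 2 := by
    rw [mul_comm 2, pow_mul']
    field_simp
    push_cast
    ring
  rw [← ENNReal.ofReal_ofNat 2, ← ENNReal.ofReal_div_of_pos two_pos, ← hterm]
  exact ENNReal.le_tsum m

/-- If limsup |g_n|²/(n ρ^n) = ∞ then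
limsup_{δ→0⁺} Σ_{n≥1} δ|g_n|²/(n(δ²+ρ^{2n})) = ∞. -/
theorem stmt5 (ρ : ℝ) (hρ : 0 < ρ) (hρ1 : ρ < 1) (g : ℕ → ℂ)
    (hlimsup : Filter.limsup
      (fun n : ℕ => ENNReal.ofReal (‖g n‖ ^ 2 / (n * ρ ^ n))) atTop = ⊤) :
    Filter.limsup (fun δ : ℝ => ∑' n : ℕ, ENNReal.ofReal
        (δ * ‖g (n + 1)‖ ^ 2 / ((n + 1) * (δ ^ 2 + ρ ^ (2 * (n + 1))))))
      (𝓝[>] (0 : ℝ)) = ⊤ := by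
  have hδ : Tendsto (fun m : ℕ ↦ ρ ^ (m + 1)) atTop (𝓝[>] 0) :=
    (tendsto_add_atTop_iff_nat 1).2 (tendsto_pow_atTop_nhdsWithin_zero_of_lt_one hρ hρ1)
  refine top_le_iff.1 ?_
  calc ⊤ = limsup (fun m : ℕ ↦
        ENNReal.ofReal (‖g (m + 1)‖ ^ 2 / ((m + 1 : ℕ) * ρ ^ (m + 1))) / 2) atTop := by
        simp_rw [div_eq_mul_inv _ (2 : ENNReal)]
        rw [ENNReal.limsup_mul_const_of_ne_top (by simp),
          limsup_nat_add (fun n : ℕ ↦ ENNReal.ofReal (‖g n‖ ^ 2 / (n * ρ ^ n))), hlimsup]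
        simp
    _ ≤ _ := limsup_le_limsup (.of_forall (half_le_tsum_at_pow hρ (fun n ↦ ‖g n‖ ^ 2)))
    _ ≤ _ := hδ.limsup_comp_le_limsup (u := fun δ : ℝ ↦ ∑' n : ℕ, ENNReal.ofReal
        (δ * ‖g (n + 1)‖ ^ 2 / ((n + 1) * (δ ^ 2 + ρ ^ (2 * (n + 1))))))
end

section
/- Let 0 < ρ < 1 and (g_n)_{n≥1} a complex sequence satisfying the gap property: there is a strictly increasing sequence (n_k) of positive integers with ρ^{n_{k+1}−n_k}|g_{n_k}|²/(n_k ρ^{n_k}) → ∞. Then Σ_{n≥1} δ|g_n|²/(n(δ² + ρ^{2n})) → ∞ as δ → 0⁺. -/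
/-!
For small `δ`, choose `k` with `ρ ^ n_{k+1} < δ ≤ ρ ^ n_k` and keep only the term `n = n_k`
of the series. Since `δ² + ρ^{2n_k} ≤ 2ρ^{2n_k}` and `δ > ρ^{n_{k+1}}`, that single term is at
least half of the `k`-th gap ratio `ρ^{n_{k+1}-n_k}|g_{n_k}|²/(n_k ρ^{n_k})`, which tends to `∞`
because `k → ∞` as `δ → 0⁺`.
-/

open Filter Topology

theorem Nat.exists_ge_and_not_succ_of_eventually_not {P : ℕ → Prop} {K : ℕ} (hK : P K)
    (hP : ∀ᶠ n in atTop, ¬ P n) : ∃ k ≥ K, P k ∧ ¬ P (k + 1) := by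
  by_contra! hstep
  obtain ⟨n, hn⟩ := (hP.and (eventually_ge_atTop K)).exists
  exact hn.1 (Nat.le_induction hK hstep n hn.2)

theorem ENNReal.le_tsum_succ (f : ℕ → ENNReal) {m : ℕ} (hm : m ≠ 0) :
    f m ≤ ∑' n, f (n + 1) := by
  obtain ⟨n, rfl⟩ := Nat.exists_eq_succ_of_ne_zero hm
  exact ENNReal.le_tsum n

theorem gap_ratio_le_two_mul {ρ δ A c : ℝ} {m n : ℕ} (hρ : 0 < ρ) (hc : 0 < c) (hA : 0 ≤ A)
    (hmn : m ≤ n) (hn : ρ ^ n ≤ δ) (hm : δ ≤ ρ ^ m) :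
    ρ ^ (n - m) * A / (c * ρ ^ m) ≤ 2 * (δ * A / (c * (δ ^ 2 + ρ ^ (2 * m)))) := by
  have hδ : 0 < δ := (pow_pos hρ n).trans_le hn
  have hsplit : ρ ^ (n - m) * ρ ^ m = ρ ^ n := by rw [← pow_add, Nat.sub_add_cancel hmn]
  have hsq : δ ^ 2 + ρ ^ (2 * m) ≤ 2 * ρ ^ (2 * m) := by
    have := pow_le_pow_left₀ hδ.le hm 2
    rw [← pow_mul, mul_comm] at this
    linarith
  calc ρ ^ (n - m) * A / (c * ρ ^ m) = 2 * (ρ ^ n * A / (c * (2 * ρ ^ (2 * m)))) := by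
        rw [← hsplit, mul_comm 2 m, pow_mul]
        field_simp
    _ ≤ 2 * (δ * A / (c * (δ ^ 2 + ρ ^ (2 * m)))) := by gcongr

theorem stmt6_general (ρ : ℝ) (hρ : 0 < ρ) (hρ1 : ρ < 1) (g : ℕ → ℂ)
    (nk : ℕ → ℕ) (hmono : StrictMono nk)
    (hGP : Tendsto (fun k : ℕ =>
        ρ ^ (nk (k + 1) - nk k) * ‖g (nk k)‖ ^ 2 /
          (nk k * ρ ^ nk k)) atTop atTop) :
    Tendsto (fun δ : ℝ => ∑' n : ℕ, ENNReal.ofReal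
        (δ * ‖g (n + 1)‖ ^ 2 / ((n + 1) * (δ ^ 2 + ρ ^ (2 * (n + 1))))))
      (𝓝[>] (0 : ℝ)) (𝓝 ⊤) := by
  rw [ENNReal.tendsto_nhds_top_iff_nat]
  intro N
  obtain ⟨K, hK⟩ := eventually_atTop.mp
    ((hGP.eventually_ge_atTop (2 * ((N : ℝ) + 1))).and (eventually_ge_atTop 1))
  filter_upwards [Ioo_mem_nhdsGT (pow_pos hρ (nk K))] with δ ⟨hδ, hδK⟩
  have hρnk : Tendsto (fun j => ρ ^ nk j) atTop (𝓝 0) :=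
    (tendsto_pow_atTop_nhds_zero_of_lt_one hρ.le hρ1).comp hmono.tendsto_atTop
  obtain ⟨k, hKk, hδk, hδk1⟩ := Nat.exists_ge_and_not_succ_of_eventually_not
    (P := fun j => δ ≤ ρ ^ nk j) hδK.le
    ((hρnk.eventually (gt_mem_nhds hδ)).mono fun _ h => not_le.mpr h)
  have hm : 1 ≤ nk k := (hK k hKk).2.trans (hmono.id_le k)
  have hterm := gap_ratio_le_two_mul hρ (c := nk k) (by exact_mod_cast hm)
    (sq_nonneg ‖g (nk k)‖) (hmono (Nat.lt_succ_self k)).le (not_le.mp hδk1).le hδk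
  calc (N : ENNReal) < ENNReal.ofReal (N + 1) := by
        rw [← Nat.cast_add_one, ENNReal.ofReal_natCast]
        exact_mod_cast Nat.lt_succ_self N
    _ ≤ ENNReal.ofReal (δ * ‖g (nk k)‖ ^ 2 / (nk k * (δ ^ 2 + ρ ^ (2 * nk k)))) :=
        ENNReal.ofReal_le_ofReal (by linarith [(hK k hKk).1])
    _ ≤ _ := by
        simpa using ENNReal.le_tsum_succ
          (fun j => ENNReal.ofReal (δ * ‖g j‖ ^ 2 / (j * (δ ^ 2 + ρ ^ (2 * j)))))
          (m := nk k) (by omega)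

/-- Under the gap property GP, Σ_{n≥1} δ|g_n|²/(n(δ²+ρ^{2n})) → ∞ as δ → 0⁺. -/
theorem stmt6 (ρ : ℝ) (hρ : 0 < ρ) (hρ1 : ρ < 1) (g : ℕ → ℂ)
    (nk : ℕ → ℕ) (hmono : StrictMono nk) (hpos : 1 ≤ nk 0)
    (hGP : Tendsto (fun k : ℕ =>
        ρ ^ (nk (k + 1) - nk k) * ‖g (nk k)‖ ^ 2 /
          (nk k * ρ ^ nk k)) atTop atTop) :
    Tendsto (fun δ : ℝ => ∑' n : ℕ, ENNReal.ofReal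
        (δ * ‖g (n + 1)‖ ^ 2 / ((n + 1) * (δ ^ 2 + ρ ^ (2 * (n + 1))))))
      (𝓝[>] (0 : ℝ)) (𝓝 ⊤) :=
  stmt6_general ρ hρ hρ1 g nk hmono hGP
end

section
/- Let z_δ = iδ/(2(2 − iδ)) for δ > 0 and 0 < ρ < 1. There exists δ₀ > 0 and constants 0 < c₁ ≤ c₂ such that for all 0 < δ ≤ δ₀ and all integers n ≥ 1, c₁(δ² + ρ^{2n}) ≤ |4z_δ² − ρ^{2n}| ≤ c₂(δ² + ρ^{2n}). -/
/-!
Writing `w = 2 - iδ`, one has `4 z_δ² - r = -(δ² + r w²) / w²` with `|w|² = 4 + δ²`.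
The numerator has modulus at most `δ² + r (4 + δ²)` and real part `δ² + r (4 - δ²)`,
so for `δ ≤ 1` and `r = ρ^{2n} ≥ 0` the quotient lies between `(δ² + r) / 5` and `δ² + r`.
-/

open Complex

lemma norm_two_sub_I_mul_sq (δ : ℝ) : ‖(2 - I * δ) ^ 2‖ = 4 + δ ^ 2 := by
  rw [norm_pow, Complex.sq_norm, normSq_apply]
  simp only [sub_re, sub_im, mul_re, mul_im, I_re, I_im, ofReal_re, ofReal_im,
    re_ofNat, im_ofNat]
  ring

lemma two_sub_I_mul_ne_zero (δ : ℝ) : (2 : ℂ) - I * δ ≠ 0 := by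
  intro h
  simpa using congrArg re h

lemma four_mul_sq_sub_eq (δ r : ℝ) :
    4 * (I * δ / (2 * (2 - I * δ))) ^ 2 - r = -(δ ^ 2 + r * (2 - I * δ) ^ 2) / (2 - I * δ) ^ 2 := by
  have := two_sub_I_mul_ne_zero δ
  field_simp
  linear_combination (4 * (δ : ℂ) ^ 2) * I_sq

lemma norm_four_mul_sq_sub_eq (δ r : ℝ) :
    ‖4 * (I * δ / (2 * (2 - I * δ))) ^ 2 - r‖ = ‖δ ^ 2 + r * (2 - I * δ) ^ 2‖ / (4 + δ ^ 2) := by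
  rw [four_mul_sq_sub_eq, norm_div, norm_neg, norm_two_sub_I_mul_sq]

lemma norm_sq_add_mul_two_sub_I_mul_sq_le {δ r : ℝ} (hr : 0 ≤ r) :
    ‖δ ^ 2 + r * (2 - I * δ) ^ 2‖ ≤ δ ^ 2 + r * (4 + δ ^ 2) := by
  calc ‖δ ^ 2 + r * (2 - I * δ) ^ 2‖ ≤ ‖(δ : ℂ) ^ 2‖ + ‖(r : ℂ) * (2 - I * δ) ^ 2‖ :=
        norm_add_le _ _
    _ = δ ^ 2 + r * (4 + δ ^ 2) := by
        rw [norm_mul, norm_two_sub_I_mul_sq, norm_pow, norm_real, norm_real, Real.norm_eq_abs,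
          Real.norm_eq_abs, sq_abs, abs_of_nonneg hr]

lemma le_norm_sq_add_mul_two_sub_I_mul_sq (δ r : ℝ) :
    δ ^ 2 + r * (4 - δ ^ 2) ≤ ‖δ ^ 2 + r * (2 - I * δ) ^ 2‖ := by
  refine le_of_eq_of_le ?_ (re_le_norm _)
  simp only [add_re, mul_re, mul_im, sub_re, sub_im, I_re, I_im, ofReal_re, ofReal_im,
    re_ofNat, im_ofNat, pow_two]
  ring

lemma norm_four_mul_sq_sub_le {δ r : ℝ} (hr : 0 ≤ r) :
    ‖4 * (I * δ / (2 * (2 - I * δ))) ^ 2 - r‖ ≤ δ ^ 2 + r := by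
  have hpos : 0 < 4 + δ ^ 2 := by positivity
  rw [norm_four_mul_sq_sub_eq, div_le_iff₀ hpos]
  nlinarith [norm_sq_add_mul_two_sub_I_mul_sq_le (δ := δ) hr, sq_nonneg δ]

lemma le_norm_four_mul_sq_sub {δ r : ℝ} (hr : 0 ≤ r) (hδ : δ ^ 2 ≤ 1) :
    (δ ^ 2 + r) / 5 ≤ ‖4 * (I * δ / (2 * (2 - I * δ))) ^ 2 - r‖ := by
  have hpos : 0 < 4 + δ ^ 2 := by positivity
  rw [norm_four_mul_sq_sub_eq, le_div_iff₀ hpos]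
  nlinarith [le_norm_sq_add_mul_two_sub_I_mul_sq δ r, mul_nonneg hr (sub_nonneg.2 hδ),
    mul_nonneg (sq_nonneg δ) (sub_nonneg.2 hδ)]

theorem stmt10_general (ρ : ℝ) (z : ℝ → ℂ)
    (hz : ∀ δ : ℝ, z δ = Complex.I * δ / (2 * (2 - Complex.I * δ))) :
    ∃ δ₀ : ℝ, 0 < δ₀ ∧ ∃ c₁ c₂ : ℝ, 0 < c₁ ∧ c₁ ≤ c₂ ∧
      ∀ δ : ℝ, 0 < δ → δ ≤ δ₀ → ∀ n : ℕ, 1 ≤ n →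
        c₁ * (δ ^ 2 + ρ ^ (2 * n)) ≤ ‖4 * z δ ^ 2 - ((ρ ^ (2 * n) : ℝ) : ℂ)‖ ∧
        ‖4 * z δ ^ 2 - ((ρ ^ (2 * n) : ℝ) : ℂ)‖ ≤ c₂ * (δ ^ 2 + ρ ^ (2 * n)) := by
  refine ⟨1, one_pos, 1 / 5, 1, by norm_num, by norm_num, fun δ hδ hδ1 n _ => ?_⟩
  have hr : 0 ≤ ρ ^ (2 * n) := (even_two_mul n).pow_nonneg ρ
  have hδsq : δ ^ 2 ≤ 1 := by nlinarith
  rw [hz, one_mul, one_div_mul_eq_div]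
  exact ⟨le_norm_four_mul_sq_sub hr hδsq, norm_four_mul_sq_sub_le hr⟩

/-- There exist δ₀ > 0 and 0 < c₁ ≤ c₂ with
c₁(δ²+ρ^{2n}) ≤ |4z_δ² − ρ^{2n}| ≤ c₂(δ²+ρ^{2n}) for all 0 < δ ≤ δ₀ and n ≥ 1. -/
theorem stmt10 (ρ : ℝ) (hρ : 0 < ρ) (hρ1 : ρ < 1) (z : ℝ → ℂ)
    (hz : ∀ δ : ℝ, z δ = Complex.I * δ / (2 * (2 - Complex.I * δ))) :
    ∃ δ₀ : ℝ, 0 < δ₀ ∧ ∃ c₁ c₂ : ℝ, 0 < c₁ ∧ c₁ ≤ c₂ ∧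
      ∀ δ : ℝ, 0 < δ → δ ≤ δ₀ → ∀ n : ℕ, 1 ≤ n →
        c₁ * (δ ^ 2 + ρ ^ (2 * n)) ≤ ‖4 * z δ ^ 2 - ((ρ ^ (2 * n) : ℝ) : ℂ)‖ ∧
        ‖4 * z δ ^ 2 - ((ρ ^ (2 * n) : ℝ) : ℂ)‖ ≤ c₂ * (δ ^ 2 + ρ ^ (2 * n)) :=
  stmt10_general ρ z hz
end

section
/- Let 0 < ρ < 1 and ε > 0, and let (a_n)_{n≥1} satisfy |a_n| ≤ C₀ (ρ^{-1} + ε)^{-n/2} for all n. Then Σ_{n≥1} (δρ^{-n}/(4+δ²) + ρ^n/δ)^{-1} · (a_n/n) → 0 as δ → 0⁺. -/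
open Filter Topology

lemma key_ineq (p d : ℝ) (hp : 0 < p) (hd : 0 < d) :
    (d * p⁻¹ / (4 + d ^ 2) + p / d)⁻¹ ≤ Real.sqrt (4 + d ^ 2) / 2 := by
  set s := Real.sqrt (4 + d ^ 2) with hs
  have h4 : (0:ℝ) < 4 + d ^ 2 := by positivity
  have hs0 : 0 < s := Real.sqrt_pos.mpr h4
  have hs2 : s ^ 2 = 4 + d ^ 2 := Real.sq_sqrt h4.le
  have hAB : 0 < d * p⁻¹ / (4 + d ^ 2) + p / d := by positivity
  rw [inv_le_comm₀ hAB (by positivity), inv_div]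
  have hrew : d * p⁻¹ / (4 + d ^ 2) + p / d = (d ^ 2 + p ^ 2 * s ^ 2) / (p * d * s ^ 2) := by
    rw [hs2]; field_simp
  rw [hrew, div_le_div_iff₀ hs0 (by positivity)]
  nlinarith [sq_nonneg (d - p * s), hp.le, hd.le, hs0.le, mul_pos hp hd]

/-- If 0 ≤ a_n ≤ C₀(ρ⁻¹+ε)^{-n/2}, then
Σ_{n≥1} (δρ^{-n}/(4+δ²) + ρ^n/δ)⁻¹ (a_n/n) → 0 as δ → 0⁺. -/
theorem stmt12 (ρ ε C₀ : ℝ) (hρ : 0 < ρ) (hρ1 : ρ < 1) (hε : 0 < ε) (hC₀ : 0 < C₀)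
    (a : ℕ → ℝ) (ha0 : ∀ n : ℕ, 0 ≤ a n)
    (ha : ∀ n : ℕ, 1 ≤ n → a n ≤ C₀ * (ρ⁻¹ + ε) ^ (-(n : ℝ) / 2)) :
    Tendsto (fun δ : ℝ => ∑' n : ℕ,
        (δ * (ρ ^ (n + 1))⁻¹ / (4 + δ ^ 2) + ρ ^ (n + 1) / δ)⁻¹ * (a (n + 1) / (n + 1)))
      (𝓝[>] (0 : ℝ)) (𝓝 0) := by
  have hb : 1 < ρ⁻¹ + ε := lt_add_of_lt_of_pos (one_lt_inv₀ hρ |>.mpr hρ1) hε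
  have hb0 : (0:ℝ) < ρ⁻¹ + ε := lt_trans one_pos hb
  set r : ℝ := (ρ⁻¹ + ε) ^ (-(1:ℝ) / 2) with hrdef
  have hr0 : 0 < r := Real.rpow_pos_of_pos hb0 _
  have hr1 : r < 1 := Real.rpow_lt_one_of_one_lt_of_neg hb (by norm_num)
  have hpow : ∀ n : ℕ, (ρ⁻¹ + ε) ^ (-(n : ℝ) / 2) = r ^ n := by
    intro n
    rw [hrdef, ← Real.rpow_natCast ((ρ⁻¹ + ε) ^ (-(1:ℝ)/2)) n, ← Real.rpow_mul hb0.le]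
    ring_nf
  have han : ∀ n : ℕ, a (n + 1) ≤ C₀ * r ^ (n + 1) := by
    intro n
    have := ha (n + 1) (Nat.le_add_left 1 n)
    rwa [hpow (n + 1)] at this
  have hsum : Summable (fun n : ℕ => Real.sqrt 5 / 2 * C₀ * r * r ^ n) :=
    (summable_geometric_of_lt_one hr0.le hr1).mul_left _
  have hmain := tendsto_tsum_of_dominated_convergence (𝓕 := 𝓝[>] (0:ℝ))
    (f := fun δ n => (δ * (ρ ^ (n + 1))⁻¹ / (4 + δ ^ 2) + ρ ^ (n + 1) / δ)⁻¹ *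
      (a (n + 1) / (n + 1)))
    (g := fun _ => (0:ℝ)) hsum ?_ ?_
  · simpa using hmain
  · -- pointwise limit
    intro n
    have hp : (0:ℝ) < ρ ^ (n + 1) := pow_pos hρ _
    apply squeeze_zero' (f := fun δ => (δ * (ρ ^ (n + 1))⁻¹ / (4 + δ ^ 2) +
        ρ ^ (n + 1) / δ)⁻¹ * (a (n + 1) / (n + 1)))
      (g := fun δ => δ * (ρ ^ (n + 1))⁻¹ * (a (n + 1) / (n + 1)))
    · filter_upwards [self_mem_nhdsWithin] with δ (hδ : 0 < δ)
      exact mul_nonneg (by positivity) (div_nonneg (ha0 _) (by positivity))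
    · filter_upwards [self_mem_nhdsWithin] with δ (hδ : 0 < δ)
      have hB : (0:ℝ) < ρ ^ (n + 1) / δ := by positivity
      have h1 : (δ * (ρ ^ (n + 1))⁻¹ / (4 + δ ^ 2) + ρ ^ (n + 1) / δ)⁻¹ ≤
          (ρ ^ (n + 1) / δ)⁻¹ := by
        apply inv_anti₀ hB
        have : (0:ℝ) ≤ δ * (ρ ^ (n + 1))⁻¹ / (4 + δ ^ 2) := by positivity
        linarith
      have h2 : (ρ ^ (n + 1) / δ)⁻¹ = δ * (ρ ^ (n + 1))⁻¹ := by
        rw [inv_div]; ring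
      rw [h2] at h1
      exact mul_le_mul_of_nonneg_right h1 (div_nonneg (ha0 _) (by positivity))
    · have : Tendsto (fun δ : ℝ => δ * (ρ ^ (n + 1))⁻¹ * (a (n + 1) / (n + 1)))
          (𝓝 (0:ℝ)) (𝓝 (0 * (ρ ^ (n + 1))⁻¹ * (a (n + 1) / (n + 1)))) := by
        exact (tendsto_id.mul_const _).mul_const _
      simpa using this.mono_left nhdsWithin_le_nhds
  · -- bound
    filter_upwards [Ioo_mem_nhdsGT_of_mem (by norm_num : (0:ℝ) ∈ Set.Ico 0 1)]
      with δ hδ n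
    obtain ⟨hδ0, hδ1⟩ := hδ
    have hp : (0:ℝ) < ρ ^ (n + 1) := pow_pos hρ _
    have hAB : (0:ℝ) < δ * (ρ ^ (n + 1))⁻¹ / (4 + δ ^ 2) + ρ ^ (n + 1) / δ := by
      positivity
    have hterm : (0:ℝ) ≤ (δ * (ρ ^ (n + 1))⁻¹ / (4 + δ ^ 2) + ρ ^ (n + 1) / δ)⁻¹ *
        (a (n + 1) / (n + 1)) :=
      mul_nonneg (by positivity) (div_nonneg (ha0 _) (by positivity))
    rw [Real.norm_eq_abs, abs_of_nonneg hterm]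
    have hk := key_ineq (ρ ^ (n + 1)) δ hp hδ0
    rw [mul_comm δ (ρ ^ (n + 1))⁻¹, mul_comm (ρ ^ (n + 1))⁻¹ δ] at hk
    have hs5 : Real.sqrt (4 + δ ^ 2) ≤ Real.sqrt 5 := by
      apply Real.sqrt_le_sqrt; nlinarith
    have hfrac : a (n + 1) / ((n:ℝ) + 1) ≤ C₀ * r ^ (n + 1) := by
      calc a (n + 1) / ((n:ℝ) + 1) ≤ a (n + 1) := by
            apply div_le_self (ha0 _); exact_mod_cast Nat.one_le_iff_ne_zero.mpr (by simp)
        _ ≤ C₀ * r ^ (n + 1) := han n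
    calc (δ * (ρ ^ (n + 1))⁻¹ / (4 + δ ^ 2) + ρ ^ (n + 1) / δ)⁻¹ * (a (n + 1) / (n + 1))
        ≤ (Real.sqrt 5 / 2) * (C₀ * r ^ (n + 1)) := by
          apply mul_le_mul (le_trans hk (by linarith)) (by exact_mod_cast hfrac)
            (div_nonneg (ha0 _) (by positivity)) (by positivity)
      _ = Real.sqrt 5 / 2 * C₀ * r * r ^ n := by ring
end
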